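/- arXiv:1908.06200 — 3 statements merged into one kernel-verified Lean document; each statement's English description precedes it below -/
import Mathlib

section
/- Let X be a continuum and U ⊆ X a connected subset. Then C(U) := {A ∈ C(X) : A ⊆ U} is a connected subset of C(X). -/
open TopologicalSpace Set

/-- The hyperspace of subcontinua of `X`. -/
abbrev Hyp (X : Type*) [MetricSpace X] : Type _ :=
  {A : NonemptyCompacts X // IsConnected (A : Set X)}

variable {X : Type*} [MetricSpace X]

/-- `C(p,X)`, the subcontinua containing `p`, as a subset of `Hyp X`. -/
def CpSet (p : X) : Set (Hyp X) := {A | p ∈ (A.1 : Set X)}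

/-- The setoid collapsing `C(p,X)` to a point. -/
def hsSetoid (p : X) : Setoid (Hyp X) where
  r A B := A = B ∨ (A ∈ CpSet p ∧ B ∈ CpSet p)
  iseqv := by
    constructor
    · intro A; exact Or.inl rfl
    · rintro A B (rfl | h); exacts [Or.inl rfl, Or.inr ⟨h.2, h.1⟩]
    · rintro A B C (rfl | h) (rfl | h')
      exacts [Or.inl rfl, Or.inr h', Or.inr h, Or.inr ⟨h.1, h'.2⟩]

/-- The hyperspace `HS(p,X) = C(X)/C(p,X)`. -/
abbrev HS (p : X) : Type _ := Quotient (hsSetoid p)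

/-- The quotient map `π_p^X`. -/
def hsMk (p : X) : Hyp X → HS p := Quotient.mk (hsSetoid p)

/-- The singleton `{p}` as a subcontinuum. -/
def singHyp (p : X) : Hyp X :=
  ⟨⟨⟨{p}, isCompact_singleton⟩, Set.singleton_nonempty p⟩, isConnected_singleton⟩

/-- The distinguished point `C_p^X` of `HS(p,X)`. -/
def CpPoint (p : X) : HS p := hsMk p (singHyp p)

/-!
Every `A ∈ C(U)` contains a point `a`, and `{a}` lies in the connected set of singletons
`{{x} | x ∈ U}`, so it suffices that the subcontinua of `A` form a connected set. If they split
into two relatively clopen pieces with `A` in the first, Zorn's lemma gives a maximal element `M`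
of the second piece: the closure of the union of a chain is a Hausdorff limit of the chain, so it
stays in the second piece. But `M ≠ A`, and boundary bumping enlarges `M` to a strictly larger
subcontinuum of `A` arbitrarily close to `M`, still in the second piece, contradicting maximality.
-/

section BoundaryBumping

variable {Y : Type*} [TopologicalSpace Y] [T2Space Y] [CompactSpace Y]

theorem exists_isClopen_disjoint_of_disjoint_connectedComponent {x : Y} {F : Set Y}
    (hF : IsClosed F) (hxF : Disjoint (connectedComponent x) F) :
    ∃ D : Set Y, IsClopen D ∧ x ∈ D ∧ Disjoint D F := by
  rw [connectedComponent_eq_iInter_isClopen, disjoint_iff_inter_eq_empty, inter_comm] at hxF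
  obtain ⟨t, ht⟩ := hF.isCompact.elim_finite_subfamily_closed _ (fun s => s.2.1.1) hxF
  refine ⟨⋂ s ∈ t, (s : Set Y), isClopen_biInter_finset fun s _ => s.2.1,
    mem_iInter₂.mpr fun s _ => s.2.2, ?_⟩
  rw [disjoint_iff_inter_eq_empty, inter_comm, ht]

theorem connectedComponentIn_inter_frontier_nonempty [PreconnectedSpace Y] {K : Set Y}
    (hK : IsClosed K) (hKY : K ≠ univ) {x : Y} (hx : x ∈ K) :
    (connectedComponentIn K x ∩ frontier K).Nonempty := by
  have : CompactSpace K := isCompact_iff_compactSpace.mp hK.isCompact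
  by_contra hempty
  obtain ⟨D, hD, hxD, hDF⟩ :=
    exists_isClopen_disjoint_of_disjoint_connectedComponent (x := ⟨x, hx⟩)
      (isClosed_frontier.preimage continuous_subtype_val) <| disjoint_left.mpr fun z hz hzF =>
        hempty ⟨z, connectedComponentIn_eq_image hx ▸ mem_image_of_mem _ hz, hzF⟩
  obtain ⟨O, hO, rfl⟩ := isOpen_induced_iff.mp hD.isOpen
  have hDint : Subtype.val '' (Subtype.val ⁻¹' O : Set K) = O ∩ interior K := by
    refine (Subtype.image_preimage_coe K O).trans <| subset_antisymm (fun z ⟨hzK, hzO⟩ => ⟨hzO, ?_⟩)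
      (inter_subset_inter_right _ interior_subset |>.trans (inter_comm _ _).subset)
    have hzF : z ∉ frontier K := disjoint_left.mp hDF (show (⟨z, hzK⟩ : K) ∈ _ from hzO)
    rw [← hK.closure_eq, closure_eq_interior_union_frontier] at hzK
    exact hzK.resolve_right hzF
  have hDclopen : IsClopen (O ∩ interior K) :=
    ⟨hDint ▸ (hD.isClosed.isCompact.image continuous_subtype_val).isClosed,
      hO.inter isOpen_interior⟩
  rcases isClopen_iff.mp hDclopen with h | h
  · exact (h ▸ hDint ▸ mem_image_of_mem _ hxD : x ∈ (∅ : Set Y))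
  · exact hKY (eq_univ_of_univ_subset (h ▸ inter_subset_right.trans interior_subset))

end BoundaryBumping

open Metric in
theorem exists_isConnected_ssuperset_hausdorffDist_le {Y : Type*} [MetricSpace Y] [CompactSpace Y]
    [PreconnectedSpace Y] {M : Set Y} (hM : IsPreconnected M) (hMne : M.Nonempty)
    (hMY : M ≠ univ) {ε : ℝ} (hε : 0 < ε) :
    ∃ E : Set Y, IsCompact E ∧ IsConnected E ∧ M ⊂ E ∧ hausdorffDist E M ≤ ε := by
  obtain ⟨m, hm⟩ := hMne
  have hg : Continuous (infDist · M) := continuous_infDist_pt M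
  set K := {z : Y | infDist z M ≤ ε}
  have hMK : M ⊆ K := fun z hz => (infDist_zero_of_mem hz).trans_le hε.le
  suffices ∃ E, IsCompact E ∧ IsConnected E ∧ M ⊂ E ∧ E ⊆ K from
    let ⟨E, hEc, hE, hME, hEK⟩ := this
    ⟨E, hEc, hE, hME, hausdorffDist_le_of_infDist hε.le hEK fun z hz =>
      (infDist_zero_of_mem (hME.subset hz)).trans_le hε.le⟩
  by_cases hK : K = univ
  · exact ⟨univ, isCompact_univ, ⟨⟨m, trivial⟩, isPreconnected_univ⟩,
      ssubset_univ_iff.mpr hMY, hK.ge⟩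
  have hKc : IsClosed K := isClosed_le hg continuous_const
  obtain ⟨y, hyC, hyK⟩ := connectedComponentIn_inter_frontier_nonempty hKc hK (hMK hm)
  have hyM : y ∉ M := fun hy =>
    hε.ne ((infDist_zero_of_mem hy).symm.trans (frontier_le_subset_eq hg continuous_const hyK))
  have hC : IsConnected (connectedComponentIn K m) :=
    isConnected_connectedComponentIn_iff.mpr (hMK hm)
  refine ⟨closure (connectedComponentIn K m), isClosed_closure.isCompact, hC.closure,
    ssubset_of_subset_not_subset ((hM.subset_connectedComponentIn hm hMK).trans subset_closure)
      fun h => hyM (h (subset_closure hyC)),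
    hKc.closure_subset_iff.mpr (connectedComponentIn_subset _ _)⟩

namespace Hyp

def ofSet (E : Set X) (hE : IsCompact E) (hc : IsConnected E) : Hyp X :=
  ⟨⟨⟨E, hE⟩, hc.nonempty⟩, hc⟩

theorem le_iff {A B : Hyp X} : A ≤ B ↔ (A.1 : Set X) ⊆ B.1 := Iff.rfl

theorem lt_iff {A B : Hyp X} : A < B ↔ (A.1 : Set X) ⊂ B.1 := Iff.rfl

theorem dist_eq (A B : Hyp X) : dist A B = Metric.hausdorffDist (A.1 : Set X) B.1 := rfl

theorem exists_lt_le_dist_le {M A : Hyp X} (hMA : M < A) {ε : ℝ} (hε : 0 < ε) :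
    ∃ B : Hyp X, M < B ∧ B ≤ A ∧ dist B M ≤ ε := by
  set Y := (A.1 : Set X)
  have : CompactSpace Y := isCompact_iff_compactSpace.mp A.1.isCompact
  have : PreconnectedSpace Y := Subtype.preconnectedSpace A.2.isPreconnected
  set M' : Set Y := Subtype.val ⁻¹' M.1
  have hM' : Subtype.val '' M' = M.1 := by
    rw [Subtype.image_preimage_coe, inter_eq_right.mpr hMA.le]
  obtain ⟨m, hm⟩ := M.1.nonempty
  have hM'Y : M' ≠ univ := fun h => hMA.not_ge fun x hx => (h.ge (mem_univ ⟨x, hx⟩) : _)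
  obtain ⟨E, hEc, hE, hM'E, hEM'⟩ := exists_isConnected_ssuperset_hausdorffDist_le
    (Topology.IsInducing.subtypeVal.isPreconnected_image.mp (hM' ▸ M.2.isPreconnected))
    ⟨⟨m, hMA.le hm⟩, hm⟩ hM'Y hε
  refine ⟨ofSet (Subtype.val '' E) (hEc.image continuous_subtype_val)
    (hE.image _ continuous_subtype_val.continuousOn), ?_,
    (image_subset_range _ _).trans Subtype.range_coe.subset, ?_⟩
  · exact lt_iff.mpr (hM' ▸ Subtype.val_injective.image_strictMono hM'E)
  · rw [dist_eq, ← hM']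
    exact (Metric.hausdorffDist_image isometry_subtype_coe).trans_le hEM'

open Metric in
theorem exists_upperBound_mem_closure {c : Set (Hyp X)} (hc : IsChain (· ≤ ·) c)
    (hne : c.Nonempty) {A : Hyp X} (hcA : ∀ C ∈ c, C ≤ A) :
    ∃ U : Hyp X, U ≤ A ∧ U ∈ upperBounds c ∧ U ∈ closure c := by
  obtain ⟨C₀, hC₀⟩ := hne
  have : Nonempty c := ⟨⟨C₀, hC₀⟩⟩
  set F : c → Set X := fun C => (C.1.1 : Set X)
  have hF : Directed (· ⊆ ·) F := hc.directed
  set E := closure (⋃ C, F C)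
  have hEA : E ⊆ A.1 :=
    closure_minimal (iUnion_subset fun C => hcA C C.2) A.1.isCompact.isClosed
  have hEc : IsCompact E := A.1.isCompact.of_isClosed_subset isClosed_closure hEA
  have hE : IsConnected E := by
    refine IsConnected.closure ⟨C₀.1.nonempty.mono (subset_iUnion F ⟨C₀, hC₀⟩), ?_⟩
    rw [← sUnion_range]
    exact .sUnion_directed (directedOn_range.mpr hF) (forall_mem_range.mpr fun C => C.1.2.2)
  refine ⟨ofSet E hEc hE, hEA, fun C hC => (subset_iUnion F ⟨C, hC⟩).trans subset_closure, ?_⟩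
  refine Metric.mem_closure_iff.mpr fun ε hε => ?_
  obtain ⟨C, hC⟩ := hEc.elim_directed_cover (fun C => thickening (ε / 2) (F C))
    (fun _ => isOpen_thickening)
    ((closure_subset_thickening (half_pos hε) _).trans (thickening_iUnion _ _).subset)
    (hF.mono_comp (g := thickening (ε / 2)) _ fun _ _ h => thickening_subset_of_subset _ h)
  refine ⟨C.1, C.2, ?_⟩
  calc dist (ofSet E hEc hE) C.1 = hausdorffDist E (F C) := dist_eq _ _
    _ ≤ ε / 2 := hausdorffDist_le_of_mem_dist (half_pos hε).le
        (fun x hx => let ⟨y, hy, hxy⟩ := mem_thickening_iff.mp (hC hx); ⟨y, hy, hxy.le⟩)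
        (fun x hx => ⟨x, subset_closure (mem_iUnion_of_mem C hx), by simpa using (half_pos hε).le⟩)
    _ < ε := half_lt_self hε

theorem mem_of_le_of_mem_of_isOpen {A B : Hyp X} {u v : Set (Hyp X)} (hu : IsOpen u)
    (hv : IsOpen v) (huv : Iic A ⊆ u ∪ v) (hdisj : ∀ C ≤ A, C ∈ u → C ∉ v) (hBA : B ≤ A)
    (hBv : B ∈ v) : A ∈ v := by
  have hchain : ∀ c ⊆ Iic A ∩ v, IsChain (· ≤ ·) c → ∀ C ∈ c, ∃ U ∈ Iic A ∩ v, ∀ D ∈ c, D ≤ U := by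
    intro c hcv hc C hC
    obtain ⟨U, hUA, hUc, hUcl⟩ := exists_upperBound_mem_closure hc ⟨C, hC⟩ fun D hD => (hcv hD).1
    refine ⟨U, ⟨hUA, ?_⟩, hUc⟩
    by_contra hUv
    obtain ⟨D, hDu, hDc⟩ := mem_closure_iff.mp hUcl u hu ((huv hUA).resolve_right hUv)
    exact hdisj D (hcv hDc).1 hDu (hcv hDc).2
  obtain ⟨M, -, hM⟩ := zorn_le_nonempty₀ _ hchain B ⟨hBA, hBv⟩
  rcases (show M ≤ A from hM.prop.1).lt_or_eq with hMA | rfl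
  · obtain ⟨ε, hε, hball⟩ := Metric.isOpen_iff.mp hv M hM.prop.2
    obtain ⟨B', hMB', hB'A, hB'M⟩ := exists_lt_le_dist_le hMA (half_pos hε)
    exact absurd hMB' <| hM.not_gt
      ⟨hB'A, hball (Metric.mem_ball.mpr (hB'M.trans_lt (half_lt_self hε)))⟩
  · exact hM.prop.2

theorem isPreconnected_Iic (A : Hyp X) : IsPreconnected (Iic A) := by
  rintro u v hu hv huv ⟨B, hBA, hBu⟩ ⟨C, hCA, hCv⟩
  by_contra h
  have hdisj : ∀ D ≤ A, D ∈ u → D ∉ v := fun D hD hDu hDv => h ⟨D, hD, hDu, hDv⟩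
  rcases huv (le_refl A) with hAu | hAv
  · exact hdisj A le_rfl hAu (mem_of_le_of_mem_of_isOpen hu hv huv hdisj hCA hCv)
  · exact hdisj A le_rfl (mem_of_le_of_mem_of_isOpen hv hu (union_comm u v ▸ huv)
      (fun D hD hDv hDu => hdisj D hD hDu hDv) hBA hBu) hAv

end Hyp

theorem isometry_singHyp : Isometry (singHyp : X → Hyp X) :=
  Isometry.of_dist_eq fun _ _ => Metric.hausdorffDist_singleton

theorem stmt3_general (U : Set X) (hU : IsConnected U) :
    IsConnected {A : Hyp X | (A.1 : Set X) ⊆ U} := by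
  obtain ⟨p, hp⟩ := hU.nonempty
  refine ⟨⟨singHyp p, singleton_subset_iff.mpr hp⟩,
    isPreconnected_of_forall (singHyp p) fun A hA => ?_⟩
  obtain ⟨a, ha⟩ := A.1.nonempty
  have hsub : singHyp '' U ∪ Iic A ⊆ {B : Hyp X | (B.1 : Set X) ⊆ U} :=
    union_subset (image_subset_iff.mpr fun x => singleton_subset_iff.mpr)
      fun B hB => (Hyp.le_iff.mp hB).trans hA
  refine ⟨singHyp '' U ∪ Iic A, hsub, .inl (mem_image_of_mem _ hp), .inr self_mem_Iic, ?_⟩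
  exact (hU.isPreconnected.image _ isometry_singHyp.continuous.continuousOn).union (singHyp a)
    (mem_image_of_mem _ (hA ha)) (singleton_subset_iff.mpr ha) (Hyp.isPreconnected_Iic A)

theorem stmt3 [CompactSpace X] [ConnectedSpace X] [Nontrivial X] (U : Set X) (hU : IsConnected U) :
    IsConnected {A : Hyp X | (A.1 : Set X) ⊆ U} :=
  stmt3_general U hU
end

section
/- Let X be a continuum and p ∈ X. If C(X) is homeomorphic to HS(p,X), then X \ {p} is connected. -/
open TopologicalSpace Set

variable {X : Type*} [MetricSpace X]

/-!
Order intervals `Icc E F` of subcontinua are connected: a maximal element of `Icc E F ∩ t` for a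
closed `t` (Zorn, using that the closure of the union of a chain of subcontinua is a Hausdorff
limit of the chain) is either `F` or, by boundary bumping, a limit of strictly larger members of
`Icc E F` outside `t`. Such intervals join any two subcontinua of `X` while avoiding a given
third one, so `C(X)` has no cut points. Through the homeomorphism, `C_p^X` is not a cut point of
`HS(p,X)`; but a separation `u, v` of `X \ {p}` would separate `HS(p,X) \ {C_p^X}` into the
classes of the subcontinua lying in `u` and those lying in `v`.
-/

open Metric

theorem exists_isClopen_subset_of_connectedComponent_subset {Y : Type*} [TopologicalSpace Y]
    [T2Space Y] [CompactSpace Y] {x : Y} {U : Set Y} (hU : IsOpen U)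
    (h : connectedComponent x ⊆ U) : ∃ s, IsClopen s ∧ x ∈ s ∧ s ⊆ U := by
  rw [connectedComponent_eq_iInter_isClopen, ← disjoint_compl_right_iff_subset,
    disjoint_iff_inter_eq_empty, inter_comm] at h
  obtain ⟨t, ht⟩ := hU.isClosed_compl.isCompact.elim_finite_subfamily_closed
    (fun s : {s : Set Y // IsClopen s ∧ x ∈ s} => (s : Set Y)) (fun s => s.2.1.1) h
  refine ⟨⋂ s ∈ t, (s : Set Y), isClopen_biInter_finset fun s _ => s.2.1,
    mem_iInter₂.2 fun s _ => s.2.2, ?_⟩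
  rwa [← disjoint_compl_left_iff_subset, disjoint_iff_inter_eq_empty]

theorem IsCompact.connectedComponentIn {Y : Type*} [TopologicalSpace Y] {K : Set Y}
    (hK : IsCompact K) (x : Y) : IsCompact (connectedComponentIn K x) := by
  by_cases hx : x ∈ K
  · have := isCompact_iff_compactSpace.1 hK
    rw [connectedComponentIn_eq_image hx]
    exact isClosed_connectedComponent.isCompact.image continuous_subtype_val
  · rw [connectedComponentIn_eq_empty hx]
    exact isCompact_empty

/-- Boundary bumping. -/
theorem IsPreconnected.exists_mem_connectedComponentIn_notMem {Y : Type*} [TopologicalSpace Y]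
    [T2Space Y] {B K U : Set Y} {a p : Y} (hB : IsPreconnected B) (hK : IsCompact K)
    (hKB : K ⊆ B) (hU : IsOpen U) (hUK : U ∩ B ⊆ K) (ha : a ∈ K) (hp : p ∈ B \ K) :
    ∃ x ∈ _root_.connectedComponentIn K a, x ∉ U := by
  rw [← not_subset]
  intro hCU
  have := isCompact_iff_compactSpace.1 hK
  rw [connectedComponentIn_eq_image ha, image_subset_iff] at hCU
  obtain ⟨s, hs, has, hsU⟩ :=
    exists_isClopen_subset_of_connectedComponent_subset (hU.preimage continuous_subtype_val) hCU
  obtain ⟨O, hO, rfl⟩ := isOpen_induced_iff.1 hs.isOpen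
  have hD : IsClosed (((↑) : K → Y) '' ((↑) ⁻¹' O)) :=
    (hs.isClosed.isCompact.image continuous_subtype_val).isClosed
  obtain ⟨x, hxB, ⟨hxO, hxU⟩, hxD⟩ := hB (O ∩ U) _ (hO.inter hU) hD.isOpen_compl
    (fun x _ => or_iff_not_imp_right.2 fun hx => by
      obtain ⟨y, hy, rfl⟩ := not_not.1 hx
      exact ⟨hy, hsU hy⟩)
    ⟨a, hKB ha, has, hsU has⟩ ⟨p, hp.1, fun ⟨y, _, hy⟩ => hp.2 (hy ▸ y.2)⟩
  exact hxD ⟨⟨x, hUK ⟨hxU, hxB⟩⟩, hxO, rfl⟩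

namespace Hyp

/-- The component of `A` in a small closed neighbourhood of `A` inside `B` bumps into the
boundary of that neighbourhood, so it is strictly larger than `A` and close to it. -/
theorem mem_closure_Ioc_of_lt {A B : Hyp X} (hAB : A < B) : A ∈ closure (Ioc A B) := by
  obtain ⟨p, hpB, hpA⟩ := not_subset.1 (not_le_of_gt hAB)
  have hp : 0 < infEDist p (A.1 : Set X) :=
    infEDist_pos_iff_notMem_closure.2 (A.1.isCompact.isClosed.closure_eq.symm ▸ hpA)
  refine EMetric.mem_closure_iff.2 fun ε hε => ?_
  obtain ⟨δ, hδ, hδε⟩ := exists_between (lt_min hε hp)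
  set K := (B.1 : Set X) ∩ {x | infEDist x (A.1 : Set X) ≤ δ}
  have hK : IsCompact K :=
    B.1.isCompact.inter_right (isClosed_le continuous_infEDist continuous_const)
  obtain ⟨a, ha⟩ := A.1.nonempty
  have hAK : (A.1 : Set X) ⊆ K := fun x hx => ⟨hAB.le hx, by simp [infEDist_zero_of_mem hx]⟩
  have hU : IsOpen {x | infEDist x (A.1 : Set X) < δ} :=
    isOpen_lt continuous_infEDist continuous_const
  obtain ⟨r, hrC, hrA⟩ := B.2.isPreconnected.exists_mem_connectedComponentIn_notMem hK
    inter_subset_left hU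
    (fun x hx => ⟨hx.2, le_of_lt (show infEDist x (A.1 : Set X) < δ from hx.1)⟩) (hAK ha)
    ⟨hpB, fun hpK => (hδε.trans_le (min_le_right _ _)).not_ge hpK.2⟩
  set C := connectedComponentIn K a
  have hAC : (A.1 : Set X) ⊆ C := A.2.isPreconnected.subset_connectedComponentIn ha hAK
  let R : Hyp X := ⟨⟨⟨C, hK.connectedComponentIn a⟩, A.1.nonempty.mono hAC⟩,
    isConnected_connectedComponentIn_iff.2 (hAK ha)⟩
  refine ⟨R, ⟨lt_of_le_of_ne hAC ?_, (connectedComponentIn_subset K a).trans inter_subset_left⟩,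
    ?_⟩
  · intro hAR
    have hrA' : r ∈ (A.1 : Set X) := (congrArg (fun A : Hyp X => (A.1 : Set X)) hAR) ▸ hrC
    exact hrA (by simp [infEDist_zero_of_mem hrA', hδ])
  · refine lt_of_le_of_lt (hausdorffEDist_le_of_infEDist (fun x hx => ?_) fun x hx => ?_)
      (hδε.trans_le (min_le_left _ _))
    · exact (infEDist_zero_of_mem (hAC hx)).trans_le zero_le
    · exact (connectedComponentIn_subset K a hx).2

theorem continuous_singHyp : Continuous (singHyp : X → Hyp X) :=
  NonemptyCompacts.continuous_singleton.subtype_mk _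

theorem isOpen_setOf_subset {U : Set X} (hU : IsOpen U) :
    IsOpen {A : Hyp X | (A.1 : Set X) ⊆ U} :=
  (NonemptyCompacts.isOpen_subsets_of_isOpen hU).preimage continuous_subtype_val

section

variable [CompactSpace X]

theorem exists_isLUB_mem_closure {c : Set (Hyp X)} (hc : IsChain (· ≤ ·) c) (hne : c.Nonempty) :
    ∃ U, IsLUB c U ∧ U ∈ closure c := by
  have hsub : ∀ A ∈ c, (A.1 : Set X) ⊆ closure (⋃ A ∈ c, (A.1 : Set X)) := fun A hA =>
    (subset_biUnion_of_mem (u := fun A : Hyp X => (A.1 : Set X)) hA).trans subset_closure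
  have hconn : IsPreconnected (closure (⋃ A ∈ c, (A.1 : Set X))) := by
    rw [← sUnion_image]
    refine (IsPreconnected.sUnion_directed (directedOn_image.2 hc.directedOn) ?_).closure
    rintro _ ⟨A, -, rfl⟩
    exact A.2.isPreconnected
  obtain ⟨A₀, hA₀⟩ := hne
  let U : Hyp X := ⟨⟨⟨_, isClosed_closure.isCompact⟩, A₀.1.nonempty.mono (hsub A₀ hA₀)⟩,
    A₀.1.nonempty.mono (hsub A₀ hA₀), hconn⟩
  refine ⟨U, ⟨hsub, fun V hV => closure_minimal (iUnion₂_subset hV) V.1.isCompact.isClosed⟩, ?_⟩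
  refine EMetric.mem_closure_iff.2 fun ε hε => ?_
  obtain ⟨δ, hδ, hδε⟩ := exists_between hε
  have : Nonempty c := ⟨⟨A₀, hA₀⟩⟩
  -- the closure is compact, so it lies in the `δ`-neighbourhood of a single member of the chain
  obtain ⟨⟨A, hA⟩, hUA⟩ := isClosed_closure.isCompact.elim_directed_cover
    (fun A : c => {x | infEDist x (A.1.1 : Set X) < δ})
    (fun A => isOpen_lt continuous_infEDist continuous_const)
    (fun x hx => by
      rw [mem_closure_iff_infEDist_zero, infEDist_biUnion] at hx
      obtain ⟨A, hA, hxA⟩ : ∃ A ∈ c, infEDist x (A.1 : Set X) < δ := by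
        simpa only [iInf_lt_iff, exists_prop] using hx.trans_lt hδ
      exact mem_iUnion.2 ⟨⟨A, hA⟩, hxA⟩)
    (fun A B => by
      obtain ⟨C, hC, hAC, hBC⟩ := hc.directedOn A A.2 B B.2
      exact ⟨⟨C, hC⟩, fun x hx => (infEDist_anti hAC).trans_lt hx,
        fun x hx => (infEDist_anti hBC).trans_lt hx⟩)
  refine ⟨A, hA, lt_of_le_of_lt (hausdorffEDist_le_of_infEDist (fun x hx => (hUA hx).le)
    fun x hx => ?_) hδε⟩
  exact (infEDist_zero_of_mem (hsub A hA hx)).trans_le zero_le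

theorem isPreconnected_Icc (E F : Hyp X) : IsPreconnected (Icc E F) := by
  -- a maximal member of `Icc E F ∩ t` other than `F` is a limit of members outside `t`
  have key : ∀ t t' : Set (Hyp X), IsClosed t → IsClosed t' → Icc E F ⊆ t ∪ t' →
      (Icc E F ∩ t).Nonempty → (Icc E F ∩ (t ∩ t')).Nonempty ∨ F ∈ t := by
    rintro t t' ht ht' hcov ⟨A, hA⟩
    obtain ⟨M, -, hM⟩ := zorn_le_nonempty₀ (Icc E F ∩ t) (fun c hc hchain B hB => by
      obtain ⟨U, hU, hUc⟩ := exists_isLUB_mem_closure hchain ⟨B, hB⟩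
      exact ⟨U, ⟨⟨(hc hB).1.1.trans (hU.1 hB), hU.2 fun C hC => (hc hC).1.2⟩,
        closure_minimal (hc.trans inter_subset_right) ht hUc⟩, hU.1⟩) A hA
    obtain ⟨⟨hEM, hMF⟩, hMt⟩ := hM.prop
    rcases hMF.lt_or_eq with hMF | rfl
    · refine Or.inl ⟨M, ⟨hEM, hMF.le⟩, hMt, closure_minimal (fun R hR => ?_) ht'
        (mem_closure_Ioc_of_lt hMF)⟩
      have hRF : R ∈ Icc E F := ⟨hEM.trans hR.1.le, hR.2⟩
      exact (hcov hRF).resolve_left fun hRt => hR.1.not_ge (hM.2 ⟨hRF, hRt⟩ hR.1.le)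
    · exact Or.inr hMt
  rw [isPreconnected_closed_iff]
  intro t t' ht ht' hcov hne hne'
  rcases key t t' ht ht' hcov hne with h | hFt
  · exact h
  rcases key t' t ht' ht (by rwa [union_comm]) hne' with h | hFt'
  · rwa [inter_comm t' t] at h
  obtain ⟨A, hA, -⟩ := hne
  exact ⟨F, ⟨hA.1.trans hA.2, le_rfl⟩, hFt, hFt'⟩

/-- Every `B ≠ A₀` is joined to `X` (if `A₀` is a singleton) or to the singletons (otherwise) by
an order interval avoiding `A₀`. -/
theorem isPreconnected_compl_singleton [ConnectedSpace X] (A₀ : Hyp X) :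
    IsPreconnected ({A₀}ᶜ : Set (Hyp X)) := by
  by_cases hA₀ : ∃ a, (A₀.1 : Set X) = {a}
  · obtain ⟨a, ha⟩ := hA₀
    let T : Hyp X := ⟨⊤, by simpa using isConnected_univ⟩
    refine isPreconnected_of_forall T fun B hB =>
      ⟨Icc B T, fun A hA hAA₀ => hB ?_, right_mem_Icc.2 (show B.1 ≤ ⊤ from le_top),
        left_mem_Icc.2 (show B.1 ≤ ⊤ from le_top), isPreconnected_Icc B T⟩
    have hBa : (B.1 : Set X) ⊆ {a} := ha ▸ hAA₀ ▸ hA.1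
    exact Subtype.ext <| NonemptyCompacts.ext <|
      (B.1.nonempty.subset_singleton_iff.1 hBa).trans ha.symm
  · obtain ⟨x₀⟩ : Nonempty X := inferInstance
    have hrange : range singHyp ⊆ ({A₀}ᶜ : Set (Hyp X)) := by
      rintro _ ⟨x, rfl⟩ h
      exact hA₀ ⟨x, congrArg (fun A : Hyp X => (A.1 : Set X)) h.symm⟩
    refine isPreconnected_of_forall (singHyp x₀) fun B hB => ?_
    obtain ⟨b, hbB, hb⟩ : ∃ b ∈ (B.1 : Set X), A₀ ≤ B → b ∉ (A₀.1 : Set X) := by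
      by_cases hle : A₀ ≤ B
      · obtain ⟨b, hbB, hbA₀⟩ := not_subset.1 fun h => hB (le_antisymm h hle)
        exact ⟨b, hbB, fun _ => hbA₀⟩
      · obtain ⟨b, hbB⟩ := B.1.nonempty
        exact ⟨b, hbB, fun h => (hle h).elim⟩
    have hbB' : singHyp b ≤ B := singleton_subset_iff.2 hbB
    refine ⟨Icc (singHyp b) B ∪ range singHyp, union_subset ?_ hrange, Or.inr ⟨x₀, rfl⟩,
      Or.inl (right_mem_Icc.2 hbB'), (isPreconnected_Icc _ B).union (singHyp b)
        (left_mem_Icc.2 hbB') ⟨b, rfl⟩ (isPreconnected_range continuous_singHyp)⟩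
    rintro A ⟨hbA, hAB⟩ rfl
    exact hb hAB (hbA rfl)

end

end Hyp

theorem hsMk_eq_hsMk_iff {p : X} {A B : Hyp X} :
    hsMk p A = hsMk p B ↔ A = B ∨ (A ∈ CpSet p ∧ B ∈ CpSet p) :=
  Quotient.eq

theorem hsMk_eq_cpPoint_iff {p : X} {A : Hyp X} : hsMk p A = CpPoint p ↔ p ∈ (A.1 : Set X) := by
  refine hsMk_eq_hsMk_iff.trans ⟨?_, fun h => Or.inr ⟨h, rfl⟩⟩
  rintro (rfl | ⟨h, -⟩)
  exacts [rfl, h]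

/-- Away from `C(p,X)` the quotient map is injective, so it maps open sets there to open sets. -/
theorem isOpen_hsMk_image {p : X} {S : Set (Hyp X)} (hS : IsOpen S) (hp : ∀ A ∈ S, A ∉ CpSet p) :
    IsOpen (hsMk p '' S) := by
  have hsat : hsMk p ⁻¹' (hsMk p '' S) = S := by
    refine Subset.antisymm ?_ (subset_preimage_image _ _)
    rintro A ⟨B, hB, hBA⟩
    rcases hsMk_eq_hsMk_iff.1 hBA with rfl | ⟨hBp, -⟩
    exacts [hB, (hp B hB hBp).elim]
  rw [← hsat] at hS
  exact isQuotientMap_quotient_mk'.isOpen_preimage.1 hS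

theorem isPreconnected_compl_singleton_of_isPreconnected_compl_cpPoint {p : X}
    (h : IsPreconnected ({CpPoint p}ᶜ : Set (HS p))) : IsPreconnected ({p}ᶜ : Set X) := by
  rintro u v hu hv hcov ⟨x, hxp, hxu⟩ ⟨y, hyp, hyv⟩
  by_contra huv
  have hdisj : Disjoint (u ∩ {p}ᶜ) (v ∩ {p}ᶜ) := disjoint_left.2 fun z hzu hzv =>
    huv ⟨z, hzu.2, hzu.1, hzv.1⟩
  have key : ∀ w : Set X, IsOpen w →
      IsOpen (hsMk p '' {A : Hyp X | (A.1 : Set X) ⊆ w ∩ {p}ᶜ}) := fun w hw =>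
    isOpen_hsMk_image (Hyp.isOpen_setOf_subset (hw.inter isOpen_compl_singleton))
      fun A hA hpA => (hA hpA).2 rfl
  have hsing : ∀ {w : Set X} {z : X}, z ∈ w → z ≠ p →
      hsMk p (singHyp z) ∈ ({CpPoint p}ᶜ : Set (HS p)) ∩
        hsMk p '' {A : Hyp X | (A.1 : Set X) ⊆ w ∩ {p}ᶜ} := fun hzw hzp =>
    ⟨fun hz => hzp (hsMk_eq_cpPoint_iff.1 hz).symm,
      singHyp _, singleton_subset_iff.2 ⟨hzw, hzp⟩, rfl⟩
  obtain ⟨_, -, ⟨A, hAu, rfl⟩, ⟨B, hBv, hBA⟩⟩ := h _ _ (key u hu) (key v hv)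
    (fun z hz => by
      obtain ⟨A, rfl⟩ := Quotient.mk_surjective z
      have hpA : p ∉ (A.1 : Set X) := fun hpA => hz (hsMk_eq_cpPoint_iff.2 hpA)
      have hA : (A.1 : Set X) ⊆ u ∩ {p}ᶜ ∪ v ∩ {p}ᶜ := fun a ha => by
        rw [← union_inter_distrib_right]
        exact ⟨hcov (ne_of_mem_of_not_mem ha hpA), ne_of_mem_of_not_mem ha hpA⟩
      exact (A.2.isPreconnected.subset_or_subset (hu.inter isOpen_compl_singleton)
        (hv.inter isOpen_compl_singleton) hdisj hA).imp (⟨A, ·, rfl⟩) (⟨A, ·, rfl⟩))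
    ⟨_, hsing hxu hxp⟩ ⟨_, hsing hyv hyp⟩
  rcases hsMk_eq_hsMk_iff.1 hBA with rfl | ⟨hpB, -⟩
  · obtain ⟨a, ha⟩ := B.1.nonempty
    exact disjoint_left.1 hdisj (hAu ha) (hBv ha)
  · exact (hBv hpB).2 rfl

theorem stmt7 [CompactSpace X] [ConnectedSpace X] [Nontrivial X] (p : X) (h : Nonempty (Hyp X ≃ₜ HS p)) :
    IsConnected ({p}ᶜ : Set X) := by
  obtain ⟨h⟩ := h
  obtain ⟨q, hq⟩ := exists_ne p
  refine ⟨⟨q, hq⟩, isPreconnected_compl_singleton_of_isPreconnected_compl_cpPoint ?_⟩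
  have := h.isPreconnected_image.2 (Hyp.isPreconnected_compl_singleton (h.symm (CpPoint p)))
  rwa [image_compl_eq h.bijective, image_singleton, h.apply_symm_apply] at this
end

section
/- Let Y be a unicoherent, aposyndetic continuum that is colocally connected. Then Y is finitely aposyndetic: for every finite set F ⊆ Y and every y ∈ Y \ F, there is a subcontinuum W of Y with y ∈ int(W) ⊆ W ⊆ Y \ F. -/
open TopologicalSpace Set

variable {X : Type*} [MetricSpace X]

/-! Separate the points of `F ∪ {y}` by pairwise disjoint open sets `U x`, and by colocal
connectedness shrink `U x` for `x ∈ F` to an open `V x ∋ x` with connected complement. Then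
`W = ⋂ x ∈ F, (V x)ᶜ` is a continuum containing `U y` and missing `F`. It is connected because
the `V x` are disjoint: `(V a)ᶜ` and the intersection of the other complements cover the space,
so unicoherence adds one complement at a time. -/

def Unicoherent (Y : Type*) [TopologicalSpace Y] : Prop :=
  ∀ A B : Set Y, IsClosed A → IsClosed B → IsConnected A → IsConnected B →
    A ∪ B = Set.univ → IsConnected (A ∩ B)

theorem Unicoherent.isConnected_biInter_compl {Y ι : Type*} [TopologicalSpace Y]
    [ConnectedSpace Y] (huni : Unicoherent Y) {V : ι → Set Y} {s : Set ι} (hs : s.Finite)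
    (hopen : ∀ i ∈ s, IsOpen (V i)) (hconn : ∀ i ∈ s, IsConnected (V i)ᶜ)
    (hdisj : s.PairwiseDisjoint V) :
    IsConnected (⋂ i ∈ s, (V i)ᶜ) := by
  induction s, hs using Set.Finite.induction_on with
  | empty => simpa using isConnected_univ
  | @insert a s ha hs ih =>
    rw [Set.biInter_insert, Set.inter_comm]
    have hcover : (⋂ i ∈ s, (V i)ᶜ) ∪ (V a)ᶜ = Set.univ := by
      refine Set.eq_univ_of_forall fun z => or_iff_not_imp_right.2 fun hza =>
        Set.mem_iInter₂.2 fun i hi hzi => ?_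
      exact Set.disjoint_left.1 (hdisj (mem_insert a s) (mem_insert_of_mem a hi)
        (fun h => ha (h ▸ hi))) (not_not.1 hza) hzi
    refine huni _ _
      (isClosed_biInter fun i hi => (hopen i (mem_insert_of_mem a hi)).isClosed_compl)
      (hopen a (mem_insert a s)).isClosed_compl ?_ (hconn a (mem_insert a s)) hcover
    exact ih (fun i hi => hopen i (mem_insert_of_mem a hi))
      (fun i hi => hconn i (mem_insert_of_mem a hi)) (hdisj.subset (subset_insert a s))

theorem stmt19_general {Y : Type*} [MetricSpace Y] [CompactSpace Y] [ConnectedSpace Y]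
    (huni : ∀ A B : Set Y, IsClosed A → IsClosed B → IsConnected A → IsConnected B →
      A ∪ B = Set.univ → IsConnected (A ∩ B))
    (hcoloc : ∀ y : Y, ∀ U : Set Y, IsOpen U → y ∈ U →
      ∃ V : Set Y, IsOpen V ∧ y ∈ V ∧ V ⊆ U ∧ IsConnected (Vᶜ : Set Y)) :
    ∀ F : Set Y, F.Finite → ∀ y ∉ F,
      ∃ W : Set Y, IsCompact W ∧ IsConnected W ∧ y ∈ interior W ∧ W ⊆ Fᶜ := by
  intro F hF y hy
  obtain ⟨U, hU, hUdisj⟩ := (hF.insert y).t2_separation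
  choose V hVopen hxV hVU hVconn using fun x => hcoloc x (U x) (hU x).2 (hU x).1
  have hVdisj : F.PairwiseDisjoint V :=
    (hUdisj.subset (subset_insert y F)).mono fun x => hVU x
  have hUy : U y ⊆ ⋂ x ∈ F, (V x)ᶜ := fun z hz => Set.mem_iInter₂.2 fun x hx hzx =>
    Set.disjoint_left.1 (hUdisj (mem_insert y F) (mem_insert_of_mem y hx) (fun h => hy (h ▸ hx)))
      hz (hVU x hzx)
  refine ⟨⋂ x ∈ F, (V x)ᶜ, (isClosed_biInter fun x _ => (hVopen x).isClosed_compl).isCompact,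
    Unicoherent.isConnected_biInter_compl huni hF (fun x _ => hVopen x) (fun x _ => hVconn x)
      hVdisj, interior_mono hUy (mem_interior_iff_mem_nhds.2 ((hU y).2.mem_nhds (hU y).1)),
    fun z hz hzF => Set.mem_iInter₂.1 hz z hzF (hxV z)⟩

theorem stmt19 {Y : Type*} [MetricSpace Y] [CompactSpace Y] [ConnectedSpace Y] [Nontrivial Y]
    (huni : ∀ A B : Set Y, IsClosed A → IsClosed B → IsConnected A → IsConnected B →
      A ∪ B = Set.univ → IsConnected (A ∩ B))
    (hapo : ∀ x y : Y, x ≠ y →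
      ∃ M : Set Y, IsCompact M ∧ IsConnected M ∧ x ∈ interior M ∧ y ∉ M)
    (hcoloc : ∀ y : Y, ∀ U : Set Y, IsOpen U → y ∈ U →
      ∃ V : Set Y, IsOpen V ∧ y ∈ V ∧ V ⊆ U ∧ IsConnected (Vᶜ : Set Y)) :
    ∀ F : Set Y, F.Finite → ∀ y ∉ F,
      ∃ W : Set Y, IsCompact W ∧ IsConnected W ∧ y ∈ interior W ∧ W ⊆ Fᶜ :=
  stmt19_general huni hcoloc
end
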